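/- For any grid G ∈ G(n,d,k,w) and any G-block B, the boundary ∂B is contained in G. -/

import Mathlib

open Finset

/-- `I[:ℓ]`: the set of the `ℓ` smallest elements of `I` (or `I` itself if `|I| < ℓ`). -/
def takeSmallest (I : Finset ℕ) (ℓ : ℕ) : Finset ℕ :=
  I.filter fun x => (I.filter fun y => y ≤ x).card ≤ ℓ

/-- `I[ℓ+1:] = I \ I[:ℓ]`. -/
def dropSmallest (I : Finset ℕ) (ℓ : ℕ) : Finset ℕ :=
  I \ takeSmallest I ℓ

/-- An `(n,w)`-interval partition: a partition of `[n] = {1,…,n}` into consecutive,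
pairwise disjoint intervals `I_1, …, I_t`, each of size `w` or `w+1`, where for `j < j'`
every element of `I j` is smaller than every element of `I j'`. -/
structure IntervalPartition (n w : ℕ) where
  t : ℕ
  I : Fin t → Finset ℕ
  interval : ∀ j, ∃ a b, 1 ≤ a ∧ a ≤ b ∧ b ≤ n ∧ I j = Finset.Icc a b
  size : ∀ j, (I j).card = w ∨ (I j).card = w + 1
  cover : ∀ x ∈ Finset.Icc 1 n, ∃ j, x ∈ I j
  ordered : ∀ j j' : Fin t, j < j' → ∀ x ∈ I j, ∀ y ∈ I j', x < y

/-- The hypergrid `[n]^d`, as a set of tuples. -/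
def cube (n d : ℕ) : Set (Fin d → ℕ) :=
  {x | ∀ i, 1 ≤ x i ∧ x i ≤ n}

/-- The `(n,d,k,w)`-grid induced by an `(n,w)`-interval partition. -/
def gridOf (n d k w : ℕ) (P : IntervalPartition n w) : Set (Fin d → ℕ) :=
  {x ∈ cube n d | ∃ i : Fin d, ∃ j : Fin P.t, x i ∈ takeSmallest (P.I j) (k - 1)}

/-- `G ∈ 𝒢(n,d,k,w)`: `G` is the grid induced by some `(n,w)`-interval partition. -/
def IsGrid (n d k w : ℕ) (G : Set (Fin d → ℕ)) : Prop :=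
  ∃ P : IntervalPartition n w, G = gridOf n d k w P

/-- Two entries of `[n]^d` are neighbors if `∑ i, |x i − y i| = 1`. -/
def Neighbor {d : ℕ} (x y : Fin d → ℕ) : Prop :=
  (∑ i, Nat.dist (x i) (y i)) = 1

/-- A `G`-block: a connected component of the neighborhood graph on `[n]^d \ G`. -/
def IsBlock (n d : ℕ) (G B : Set (Fin d → ℕ)) : Prop :=
  B.Nonempty ∧ B ⊆ cube n d \ G ∧
    (∀ x ∈ B, ∀ y ∈ B,
      Relation.ReflTransGen
        (fun a b => a ∈ cube n d \ G ∧ b ∈ cube n d \ G ∧ Neighbor a b) x y) ∧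
    (∀ x ∈ B, ∀ y, y ∈ cube n d \ G → Neighbor x y → y ∈ B)

/-- The closure `B̄` of a block `B`. -/
def blockClosure (n d k : ℕ) (B : Set (Fin d → ℕ)) : Set (Fin d → ℕ) :=
  {x ∈ cube n d | ∃ y ∈ B, ∀ i, Nat.dist (x i) (y i) < k}

/-- The boundary `∂B = B̄ \ B` of a block `B`. -/
def blockBoundary (n d k : ℕ) (B : Set (Fin d → ℕ)) : Set (Fin d → ℕ) :=
  blockClosure n d k B \ B


/-
A point outside the grid has every coordinate outside the short prefixes `I_j[:k-1]`. Each interval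
has at least `w ≥ k` elements, so if `u ≤ z ≤ v` with `v - u < k` and `z` lies in a prefix `I_j[:k-1]`,
then `u` or `v` lies in that prefix as well: free values are closed under going between values closer
than `k`. Hence if `x ∉ G` is within sup-distance `< k` of `y ∈ B`, the monotone lattice path
from `y` to `x` avoids `G`, and `x` lies in the component `B`.
-/

lemma mem_takeSmallest_Icc {a b ℓ z : ℕ} :
    z ∈ takeSmallest (Icc a b) ℓ ↔ a ≤ z ∧ z ≤ b ∧ z < a + ℓ := by
  rw [takeSmallest, mem_filter, mem_Icc]
  by_cases hz : a ≤ z ∧ z ≤ b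
  · have : (Icc a b).filter (fun y => y ≤ z) = Icc a z := by
      ext m
      simp only [mem_filter, mem_Icc]
      omega
    rw [this, Nat.card_Icc]
    omega
  · tauto

lemma IsBlock.mem_of_reflTransGen {n d : ℕ} {G B : Set (Fin d → ℕ)} (hB : IsBlock n d G B)
    {y z : Fin d → ℕ} (hy : y ∈ B)
    (hyz : Relation.ReflTransGen
      (fun a b => a ∈ cube n d \ G ∧ b ∈ cube n d \ G ∧ Neighbor a b) y z) :
    z ∈ B := by
  induction hyz with
  | refl => exact hy
  | tail _ hstep ih => exact hB.2.2.2 _ ih _ hstep.2.1 hstep.2.2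

/-- The distance identity says that `y'` lies between `x` and `y` in every coordinate. -/
lemma exists_neighbor_between {d : ℕ} {x y : Fin d → ℕ} (hxy : y ≠ x) :
    ∃ y', Neighbor y y' ∧
      ∀ i, Nat.dist (x i) (y' i) + Nat.dist (y i) (y' i) = Nat.dist (x i) (y i) := by
  obtain ⟨i, hi⟩ : ∃ i, y i ≠ x i := Function.ne_iff.mp hxy
  refine ⟨Function.update y i (if y i < x i then y i + 1 else y i - 1), ?_, fun j => ?_⟩
  · rw [Neighbor, Finset.sum_eq_single i (fun j _ hj => by simp [hj]) (by simp)]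
    simp only [Function.update_self, Nat.dist]
    split_ifs <;> omega
  · rcases eq_or_ne j i with rfl | hj
    · simp only [Function.update_self, Nat.dist]
      split_ifs <;> omega
    · simp [hj]

lemma reflTransGen_neighbor_of_forall_mem {d k : ℕ} {S : Set ℕ}
    (hS : ∀ u ∈ S, ∀ v ∈ S, ∀ z, u ≤ z → z ≤ v → v < u + k → z ∈ S)
    {x y : Fin d → ℕ} (hx : ∀ i, x i ∈ S) (hy : ∀ i, y i ∈ S)
    (hxy : ∀ i, Nat.dist (x i) (y i) < k) :
    Relation.ReflTransGen (fun a b => (∀ i, a i ∈ S) ∧ (∀ i, b i ∈ S) ∧ Neighbor a b) y x := by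
  induction hN : ∑ i, Nat.dist (x i) (y i) using Nat.strong_induction_on generalizing y with
  | _ N ih =>
    by_cases hyx : y = x
    · rw [hyx]
    obtain ⟨y', hnb, hbetween⟩ := exists_neighbor_between hyx
    have hy' : ∀ i, y' i ∈ S := fun i => by
      have h := hbetween i
      have hi := hxy i
      unfold Nat.dist at h hi
      rcases le_total (y i) (x i) with hle | hle
      · exact hS _ (hy i) _ (hx i) _ (by omega) (by omega) (by omega)
      · exact hS _ (hx i) _ (hy i) _ (by omega) (by omega) (by omega)
    have hsum : ∑ i, Nat.dist (x i) (y' i) + 1 = N := by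
      rw [← hN, ← (hnb : ∑ i, Nat.dist (y i) (y' i) = 1), ← Finset.sum_add_distrib]
      exact Finset.sum_congr rfl fun i _ => hbetween i
    refine .head ⟨hy, hy', hnb⟩ (ih _ (by omega) hy' (fun i => ?_) rfl)
    exact lt_of_le_of_lt (by rw [← hbetween i]; omega) (hxy i)

namespace IntervalPartition

variable {n w : ℕ} (P : IntervalPartition n w)

def freeValues (k : ℕ) : Set ℕ :=
  {v | 1 ≤ v ∧ v ≤ n ∧ ∀ j, v ∉ takeSmallest (P.I j) (k - 1)}

lemma mem_cube_diff_gridOf_iff {d k : ℕ} {x : Fin d → ℕ} :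
    x ∈ cube n d \ gridOf n d k w P ↔ ∀ i, x i ∈ P.freeValues k := by
  simp only [gridOf, cube, freeValues, Set.mem_sdiff, Set.mem_ofPred_eq, not_and, not_exists]
  exact ⟨fun ⟨hx, hg⟩ i => ⟨(hx i).1, (hx i).2, fun j => hg hx i j⟩,
    fun h => ⟨fun i => ⟨(h i).1, (h i).2.1⟩, fun _ i j => (h i).2.2 j⟩⟩

lemma mem_freeValues_of_le_of_le {k : ℕ} (hkw : k ≤ w) {u v z : ℕ}
    (hu : u ∈ P.freeValues k) (hv : v ∈ P.freeValues k)
    (huz : u ≤ z) (hzv : z ≤ v) (hvu : v < u + k) : z ∈ P.freeValues k := by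
  refine ⟨by have := hu.1; omega, by have := hv.2.1; omega, fun j hz => ?_⟩
  obtain ⟨a, b, -, -, -, hI⟩ := P.interval j
  have hcard := P.size j
  rw [hI, Nat.card_Icc] at hcard
  rw [hI, mem_takeSmallest_Icc] at hz
  rcases le_or_gt a u with hau | hua
  · exact hu.2.2 j (by rw [hI, mem_takeSmallest_Icc]; omega)
  · exact hv.2.2 j (by rw [hI, mem_takeSmallest_Icc]; omega)

end IntervalPartition

theorem block_boundary_subset_grid_general (n d k w : ℕ)
    (hkw : k ≤ w) (G B : Set (Fin d → ℕ))
    (hG : IsGrid n d k w G) (hB : IsBlock n d G B) :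
    blockBoundary n d k B ⊆ G := by
  obtain ⟨P, rfl⟩ := hG
  rintro x ⟨⟨hx, y, hyB, hxy⟩, hxB⟩
  by_contra hxG
  have hxfree := (P.mem_cube_diff_gridOf_iff).mp ⟨hx, hxG⟩
  have hyfree := (P.mem_cube_diff_gridOf_iff).mp (hB.2.1 hyB)
  have hpath := reflTransGen_neighbor_of_forall_mem
    (fun u hu v hv z => P.mem_freeValues_of_le_of_le hkw hu hv) hxfree hyfree hxy
  refine hxB (hB.mem_of_reflTransGen hyB ?_)
  exact Relation.ReflTransGen.mono (fun a b hab => by simpa only [P.mem_cube_diff_gridOf_iff] using hab)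
    _ _ hpath

/-- The boundary of any `G`-block is contained in the grid `G`. -/
theorem block_boundary_subset_grid (n d k w : ℕ) (hd : 1 ≤ d) (hk : 2 ≤ k)
    (hkw : k ≤ w) (hwn : w ≤ n) (G B : Set (Fin d → ℕ))
    (hG : IsGrid n d k w G) (hB : IsBlock n d G B) :
    blockBoundary n d k B ⊆ G :=
  block_boundary_subset_grid_general n d k w hkw G B hG hB
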